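/- Sparse online regret bound (Theorem 1): Under the convexity and gradient-bound assumption (‖∇₁L(w,z)‖² ≤ A·L(w,z)+B), the truncated gradient updates w_{i+1} = T₁(w_i - η∇₁L(w_i, z_i), g_iη, θ) with w₁ = 0 satisfy, for all w̄ ∈ ℝᵈ: (1-0.5Aη)/T · Σ_{i=1}^T [L(w_i, z_i) + g_i/(1-0.5Aη) · ‖w_{i+1}·I(|w_{i+1}| ≤ θ)‖₁] ≤ (η/2)B + ‖w̄‖²/(2ηT) + (1/T)·Σ_{i=1}^T [L(w̄, z_i) + g_i·‖w̄·I(|w_{i+1}| ≤ θ)‖₁]. -/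

import Mathlib

/-!
The potential `‖w_i - w̄‖²` decreases at each step by at least `2η` times the instantaneous
regret. Coordinatewise, inside the window `|u| ≤ θ` the truncation is soft thresholding, the
proximal map of `gη |·|`, which produces the `ℓ₁` terms on both sides; outside the window it is
the identity and both indicators vanish. Convexity and `‖∇L‖² ≤ A L + B` control the gradient
step, and summing over `i` telescopes the potential down to `‖w̄‖²`, since `w₁ = 0`.
-/

open Finset

/-- Truncation operator with threshold `θ` and shrinkage `α`. -/
noncomputable def T1 (v α θ : ℝ) : ℝ :=
  if 0 ≤ v ∧ v ≤ θ then max 0 (v - α)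
  else if -θ ≤ v ∧ v ≤ 0 then min 0 (v + α)
  else v

section Truncation

variable {u α θ : ℝ}

lemma T1_of_lt_abs (h : θ < |u|) : T1 u α θ = u := by
  unfold T1
  rw [if_neg, if_neg] <;> rintro ⟨h₁, h₂⟩
  · rw [abs_of_nonpos h₂] at h; linarith
  · rw [abs_of_nonneg h₁] at h; linarith

lemma abs_T1_le_abs (hα : 0 ≤ α) : |T1 u α θ| ≤ |u| := by
  unfold T1
  split_ifs with h₁ h₂
  · rw [abs_of_nonneg (le_max_left _ _), abs_of_nonneg h₁.1]
    exact max_le h₁.1 (by linarith)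
  · rw [abs_of_nonpos (min_le_left _ _), abs_of_nonpos h₂.2, neg_le_neg_iff]
    exact le_min h₂.2 (by linarith)
  · exact le_rfl

/-- Inside the window `|u| ≤ θ`, `T1` is soft thresholding, the proximal map of `α |·|`. -/
lemma T1_subgradient (hα : 0 ≤ α) (hu : |u| ≤ θ) (x : ℝ) :
    (u - T1 u α θ) * (x - T1 u α θ) ≤ α * (|x| - |T1 u α θ|) := by
  have hx := abs_nonneg x
  have hxl := le_abs_self x
  have hxn := neg_abs_le x
  rw [abs_le] at hu
  unfold T1
  split_ifs with h₁ h₂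
  · rcases le_total α u with h | h
    · rw [max_eq_right (by linarith), abs_of_nonneg (a := u - α) (by linarith)]
      nlinarith
    · rw [max_eq_left (by linarith), abs_zero]
      nlinarith
  · rcases le_total u (-α) with h | h
    · rw [min_eq_right (by linarith), abs_of_nonpos (a := u + α) (by linarith)]
      nlinarith
    · rw [min_eq_left (by linarith), abs_zero]
      nlinarith
  · exact absurd ⟨hu.1, le_of_not_ge (fun h => h₁ ⟨h, hu.2⟩)⟩ h₂

lemma T1_sub_sq_add_le (hα : 0 ≤ α) (x : ℝ) :
    (T1 u α θ - x) ^ 2 + 2 * α * (|T1 u α θ| * (if |T1 u α θ| ≤ θ then 1 else 0))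
      ≤ (u - x) ^ 2 + 2 * α * (|x| * (if |T1 u α θ| ≤ θ then 1 else 0)) := by
  rcases le_or_gt |u| θ with hu | hu
  · have hle : |T1 u α θ| ≤ θ := (abs_T1_le_abs hα).trans hu
    simp only [hle, if_true, mul_one]
    nlinarith [T1_subgradient hα hu x, sq_nonneg (u - T1 u α θ)]
  · rw [T1_of_lt_abs hu, if_neg (not_le.mpr hu)]
    simp

end Truncation

lemma truncated_gradient_step {ι : Type*} [Fintype ι] {w w' grad x : ι → ℝ}
    {Lw Lx A B η γ θ : ℝ} (hη : 0 < η) (hγ : 0 ≤ γ)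
    (hsub : ∑ j, (x j - w j) * grad j ≤ Lx - Lw) (hgrad : ∑ j, grad j ^ 2 ≤ A * Lw + B)
    (hw' : ∀ j, w' j = T1 (w j - η * grad j) (γ * η) θ) :
    2 * η * ((1 - 0.5 * A * η) * Lw + γ * ∑ j, |w' j| * (if |w' j| ≤ θ then 1 else 0))
      ≤ (∑ j, (w j - x j) ^ 2 - ∑ j, (w' j - x j) ^ 2)
        + (2 * η * (Lx + γ * ∑ j, |x j| * (if |w' j| ≤ θ then 1 else 0)) + η ^ 2 * B) := by
  have htrunc : ∑ j, ((w' j - x j) ^ 2 + 2 * (γ * η) * (|w' j| * (if |w' j| ≤ θ then 1 else 0)))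
      ≤ ∑ j, ((w j - η * grad j - x j) ^ 2
        + 2 * (γ * η) * (|x j| * (if |w' j| ≤ θ then 1 else 0))) :=
    sum_le_sum fun j _ => hw' j ▸ T1_sub_sq_add_le (mul_nonneg hγ hη.le) (x j)
  have hexpand : ∑ j, (w j - η * grad j - x j) ^ 2
      = ∑ j, (w j - x j) ^ 2 + 2 * η * ∑ j, (x j - w j) * grad j + η ^ 2 * ∑ j, grad j ^ 2 := by
    simp only [mul_sum, ← sum_add_distrib]
    exact sum_congr rfl fun j _ => by ring
  simp only [sum_add_distrib, ← mul_sum] at htrunc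
  nlinarith [mul_le_mul_of_nonneg_left hsub (by positivity : (0 : ℝ) ≤ 2 * η),
    mul_le_mul_of_nonneg_left hgrad (sq_nonneg η)]

lemma sum_Icc_le_of_le_sub_succ {a b Φ : ℕ → ℝ} {T : ℕ}
    (h : ∀ i ∈ Icc 1 T, a i ≤ Φ i - Φ (i + 1) + b i) (hΦ : 0 ≤ Φ (T + 1)) :
    ∑ i ∈ Icc 1 T, a i ≤ Φ 1 + ∑ i ∈ Icc 1 T, b i := by
  obtain rfl | hT := T.eq_zero_or_pos
  · simpa using hΦ
  have htele : ∑ i ∈ Icc 1 T, (Φ i - Φ (i + 1)) = Φ 1 - Φ (T + 1) := by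
    rw [← neg_sub, ← sum_Icc_sub hT Φ, ← sum_neg_distrib]
    simp
  calc ∑ i ∈ Icc 1 T, a i ≤ ∑ i ∈ Icc 1 T, (Φ i - Φ (i + 1) + b i) := sum_le_sum h
    _ ≤ Φ 1 + ∑ i ∈ Icc 1 T, b i := by rw [sum_add_distrib, htele]; linarith

/-- `L i` is the loss on example `z_i`, `grad i` a subgradient of `L i` at `w i`. -/
theorem sparse_online_regret_general (d T : ℕ) (hT : 0 < T)
    (L : ℕ → (Fin d → ℝ) → ℝ) (grad : ℕ → Fin d → ℝ)
    (w : ℕ → Fin d → ℝ) (g : ℕ → ℝ)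
    (A B η θ : ℝ) (hη : 0 < η) (hAη : A * η < 2)
    (hg : ∀ i, 0 ≤ g i)
    (hw1 : ∀ j, w 1 j = 0)
    (hsub : ∀ i ∈ Finset.Icc 1 T, ∀ v : Fin d → ℝ,
      ∑ j, (v j - w i j) * grad i j ≤ L i v - L i (w i))
    (hgrad : ∀ i ∈ Finset.Icc 1 T, ∑ j, (grad i j) ^ 2 ≤ A * L i (w i) + B)
    (hupdate : ∀ i ∈ Finset.Icc 1 T, ∀ j,
      w (i + 1) j = T1 (w i j - η * grad i j) (g i * η) θ)
    (wbar : Fin d → ℝ) :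
    (1 - 0.5 * A * η) / T *
        ∑ i ∈ Finset.Icc 1 T,
          (L i (w i) + g i / (1 - 0.5 * A * η) *
            ∑ j, |w (i + 1) j| * (if |w (i + 1) j| ≤ θ then (1 : ℝ) else 0))
      ≤ (η / 2) * B + (∑ j, (wbar j) ^ 2) / (2 * η * T)
        + (1 / T) * ∑ i ∈ Finset.Icc 1 T,
            (L i wbar + g i *
              ∑ j, |wbar j| * (if |w (i + 1) j| ≤ θ then (1 : ℝ) else 0)) := by
  set c := 1 - 0.5 * A * η with hc_def
  have hc : 0 < c := by linarith
  have hTpos : (0 : ℝ) < T := by exact_mod_cast hT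
  set X := ∑ i ∈ Icc 1 T,
    (c * L i (w i) + g i * ∑ j, |w (i + 1) j| * (if |w (i + 1) j| ≤ θ then (1 : ℝ) else 0))
  set Y := ∑ i ∈ Icc 1 T,
    (L i wbar + g i * ∑ j, |wbar j| * (if |w (i + 1) j| ≤ θ then (1 : ℝ) else 0))
  have hregret : 2 * η * X ≤ ∑ j, wbar j ^ 2 + 2 * η * Y + T * (η ^ 2 * B) := by
    have h := sum_Icc_le_of_le_sub_succ (Φ := fun i => ∑ j, (w i j - wbar j) ^ 2)
      (fun i hi => truncated_gradient_step hη (hg i) (hsub i hi wbar) (hgrad i hi) (hupdate i hi))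
      (sum_nonneg fun j _ => sq_nonneg _)
    simp only [hw1, zero_sub, neg_sq, sum_add_distrib, ← mul_sum, sum_const, Nat.card_Icc,
      add_tsub_cancel_right, nsmul_eq_mul, ← hc_def] at h
    simp only [X, Y, sum_add_distrib, ← mul_sum]
    linarith
  have hLHS : c / T * ∑ i ∈ Icc 1 T,
      (L i (w i) + g i / c * ∑ j, |w (i + 1) j| * (if |w (i + 1) j| ≤ θ then (1 : ℝ) else 0))
      = X / T := by
    rw [div_mul_eq_mul_div, mul_sum]
    congr 1
    exact sum_congr rfl fun i _ => by field_simp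
  have hRHS : (η / 2 * B + (∑ j, wbar j ^ 2) / (2 * η * T) + 1 / T * Y) * T
      = (∑ j, wbar j ^ 2 + 2 * η * Y + T * (η ^ 2 * B)) / (2 * η) := by
    field_simp
    ring
  rw [hLHS, div_le_iff₀ hTpos, hRHS, le_div_iff₀ (by positivity)]
  linarith

/-- Sparse online regret bound for truncated gradient (Theorem 1).
`L i` is the loss on example `z_i`, `grad i` a subgradient of `L i` at `w i`. -/
theorem sparse_online_regret (d T : ℕ) (hT : 0 < T)
    (L : ℕ → (Fin d → ℝ) → ℝ) (grad : ℕ → Fin d → ℝ)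
    (w : ℕ → Fin d → ℝ) (g : ℕ → ℝ)
    (A B η θ : ℝ) (hA : 0 ≤ A) (hB : 0 ≤ B) (hη : 0 < η) (hAη : A * η < 2)
    (hg : ∀ i, 0 ≤ g i) (hgθ : ∀ i, g i * η ≤ θ)
    (hw1 : ∀ j, w 1 j = 0)
    (hsub : ∀ i ∈ Finset.Icc 1 T, ∀ v : Fin d → ℝ,
      ∑ j, (v j - w i j) * grad i j ≤ L i v - L i (w i))
    (hgrad : ∀ i ∈ Finset.Icc 1 T, ∑ j, (grad i j) ^ 2 ≤ A * L i (w i) + B)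
    (hupdate : ∀ i ∈ Finset.Icc 1 T, ∀ j,
      w (i + 1) j = T1 (w i j - η * grad i j) (g i * η) θ)
    (wbar : Fin d → ℝ) :
    (1 - 0.5 * A * η) / T *
        ∑ i ∈ Finset.Icc 1 T,
          (L i (w i) + g i / (1 - 0.5 * A * η) *
            ∑ j, |w (i + 1) j| * (if |w (i + 1) j| ≤ θ then (1 : ℝ) else 0))
      ≤ (η / 2) * B + (∑ j, (wbar j) ^ 2) / (2 * η * T)
        + (1 / T) * ∑ i ∈ Finset.Icc 1 T,
            (L i wbar + g i *
              ∑ j, |wbar j| * (if |w (i + 1) j| ≤ θ then (1 : ℝ) else 0)) :=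
  sparse_online_regret_general d T hT L grad w g A B η θ hη hAη hg hw1 hsub hgrad hupdate wbar
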